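/- Let H be a Hermitian d×d matrix with spectral projections P_E, and let φ, ψ ∈ ℂ^d be unit vectors with p_E = ‖P_E φ‖², q_E = ‖P_E ψ‖², Sp(φ) = {E : p_E ≠ 0}, Sp(ψ) = {E : q_E ≠ 0}. Then for every quantum operation ℳ(ρ) = ∑_k M_k ρ M_k† whose Kraus operators commute with H and with Tr[ℳ(|φ⟩⟨φ|)] > 0, the normalized fidelity satisfies ⟨ψ| ℳ(|φ⟩⟨φ|) |ψ⟩ / Tr[ ℳ(|φ⟩⟨φ|) ] ≤ ∑_{E ∈ Sp(φ) ∩ Sp(ψ)} q_E. Moreover, if Sp(φ) ∩ Sp(ψ) is nonempty, this bound F_max = ∑_{E ∈ Sp(φ) ∩ Sp(ψ)} q_E is attained by some quantum operation with a single Kraus operator commuting with H. -/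

import Mathlib

open Matrix
open scoped ComplexOrder Classical

/-- `wt P v = ‖P v‖²`, the weight of the vector `v` on the range of `P`. -/
noncomputable def wt {d : ℕ} (P : Matrix (Fin d) (Fin d) ℂ) (v : Fin d → ℂ) : ℝ :=
  (star (P *ᵥ v) ⬝ᵥ (P *ᵥ v)).re

/-!
Since the energies `E i` are distinct, a Kraus operator commuting with `H` commutes with every
spectral projection `P i`. Hence `⟨ψ|M_k φ⟩ = ⟨Qψ|M_k φ⟩` for `Q = ∑_{i ∈ Sp(φ) ∩ Sp(ψ)} P i`
(a block with `P i ψ = 0` or `P i φ = 0` contributes nothing), and Cauchy–Schwarz bounds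
`|⟨Qψ|M_k φ⟩|²` by `‖Qψ‖² ‖M_k φ‖² = F_max ‖M_k φ‖²`; summing over `k` gives the bound.
For attainment, `M₀ = t ∑_{i ∈ Sp(φ) ∩ Sp(ψ)} p_i⁻¹ P i |ψ⟩⟨φ| P i` is block diagonal, so it
commutes with `H`; it maps `φ` to `t Qψ`, so its fidelity is `‖Qψ‖² = F_max`; and it is a
contraction once `t² ≤ p_i / q_i` on the common spectrum.
-/

section CommuteSpectral

variable {K R ι : Type*} [Field K] [Ring R] [Module K R] {P : ι → R}

theorem OrthogonalIdempotents.mul_sum_smul [Fintype ι] [SMulCommClass K R R]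
    (hP : OrthogonalIdempotents P) (E : ι → K) (j : ι) :
    P j * ∑ i, E i • P i = E j • P j := by
  simp [Finset.mul_sum, mul_smul_comm, hP.mul_eq]

theorem OrthogonalIdempotents.sum_smul_mul [Fintype ι] [IsScalarTower K R R]
    (hP : OrthogonalIdempotents P) (E : ι → K) (j : ι) :
    (∑ i, E i • P i) * P j = E j • P j := by
  simp [Finset.sum_mul, smul_mul_assoc, hP.mul_eq]

theorem OrthogonalIdempotents.mul_mul_eq_zero_of_commute [Fintype ι] [IsScalarTower K R R]
    [SMulCommClass K R R] [Module.IsTorsionFree K R]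
    (hP : OrthogonalIdempotents P) {E : ι → K} (hE : Function.Injective E) {M : R}
    (hM : Commute M (∑ i, E i • P i)) {j k : ι} (hjk : j ≠ k) : P j * M * P k = 0 := by
  have h : E k • (P j * M * P k) = E j • (P j * M * P k) :=
    calc E k • (P j * M * P k) = P j * M * ((∑ i, E i • P i) * P k) := by
          rw [hP.sum_smul_mul, mul_smul_comm]
      _ = P j * (M * (∑ i, E i • P i)) * P k := by simp only [mul_assoc]
      _ = E j • (P j * M * P k) := by
          rw [hM.eq, ← mul_assoc, hP.mul_sum_smul, smul_mul_assoc, smul_mul_assoc]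
  rw [← sub_eq_zero, ← sub_smul] at h
  exact (smul_eq_zero_iff_right (sub_ne_zero.2 (hE.ne hjk.symm))).1 h

theorem CompleteOrthogonalIdempotents.commute_of_commute_sum_smul [Fintype ι] [IsScalarTower K R R]
    [SMulCommClass K R R] [Module.IsTorsionFree K R]
    (hP : CompleteOrthogonalIdempotents P) {E : ι → K} (hE : Function.Injective E) {M : R}
    (hM : Commute M (∑ i, E i • P i)) (i : ι) : Commute M (P i) := by
  have hzero {j k : ι} (hjk : j ≠ k) : P j * M * P k = 0 :=
    hP.toOrthogonalIdempotents.mul_mul_eq_zero_of_commute hE hM hjk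
  have hl : M * P i = P i * M * P i := by
    conv_lhs => rw [← one_mul (M * P i), ← hP.complete, Finset.sum_mul]
    simp_rw [← mul_assoc]
    exact Finset.sum_eq_single i (fun j _ hji => hzero hji) (by simp)
  have hr : P i * M = P i * M * P i := by
    conv_lhs => rw [← mul_one (P i * M), ← hP.complete, Finset.mul_sum]
    exact Finset.sum_eq_single i (fun j _ hji => hzero (Ne.symm hji)) (by simp)
  exact hl.trans hr.symm

theorem OrthogonalIdempotents.commute_sum_smul_mul_mul [IsScalarTower K R R]
    [SMulCommClass K R R] (hP : OrthogonalIdempotents P) (S : Finset ι) (c : ι → K) (A : R)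
    (j : ι) :
    Commute (∑ i ∈ S, c i • (P i * A * P i)) (P j) := by
  refine Commute.sum_left _ _ _ fun i _ => Commute.smul_left ?_ (c i)
  by_cases hij : i = j
  · subst hij
    simp only [Commute, SemiconjBy, mul_assoc, (hP.idem i).eq]
    rw [← mul_assoc (P i) (P i), (hP.idem i).eq]
  · simp only [Commute, SemiconjBy, mul_assoc, hP.ortho hij, mul_zero]
    rw [← mul_assoc, hP.ortho (Ne.symm hij), zero_mul]

end CommuteSpectral

section Kraus

variable {n : Type*} [Fintype n]

theorem mul_vecMulVec_star_mul_conjTranspose {m α : Type*} [NonUnitalSemiring α] [StarRing α]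
    (M : Matrix m n α) (φ : n → α) :
    M * vecMulVec φ (star φ) * Mᴴ = vecMulVec (M *ᵥ φ) (star (M *ᵥ φ)) := by
  rw [mul_vecMulVec, vecMulVec_mul, star_mulVec]

theorem mul_vecMulVec_mul_mulVec {α : Type*} [CommSemiring α] (A B : Matrix n n α)
    (u v x : n → α) :
    (A * vecMulVec u v * B) *ᵥ x = (v ⬝ᵥ (B *ᵥ x)) • (A *ᵥ u) := by
  rw [mul_vecMulVec, ← mulVec_mulVec, vecMulVec_mulVec, op_smul_eq_smul]

theorem star_dotProduct_vecMulVec_star_mulVec (u ψ : n → ℂ) :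
    star ψ ⬝ᵥ (vecMulVec u (star u) *ᵥ ψ) = Complex.normSq (star ψ ⬝ᵥ u) := by
  rw [vecMulVec_mulVec, op_smul_eq_smul, dotProduct_smul, smul_eq_mul,
    Complex.normSq_eq_conj_mul_self, star_dotProduct u ψ, Complex.star_def]

theorem star_dotProduct_self_eq_norm_sq (u : n → ℂ) :
    star u ⬝ᵥ u = (‖WithLp.toLp 2 u‖ : ℂ) ^ 2 := by
  have h := inner_self_eq_norm_sq_to_K (𝕜 := ℂ) (WithLp.toLp 2 u)
  rw [EuclideanSpace.inner_toLp_toLp, dotProduct_comm] at h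
  exact_mod_cast h

theorem normSq_star_dotProduct_le (u v : n → ℂ) :
    (Complex.normSq (star u ⬝ᵥ v) : ℂ) ≤ (star u ⬝ᵥ u) * (star v ⬝ᵥ v) := by
  have hinner : star u ⬝ᵥ v = inner ℂ (WithLp.toLp 2 u) (WithLp.toLp 2 v) := by
    rw [EuclideanSpace.inner_toLp_toLp, dotProduct_comm]
  have h : Complex.normSq (star u ⬝ᵥ v) ≤ ‖WithLp.toLp 2 u‖ ^ 2 * ‖WithLp.toLp 2 v‖ ^ 2 := by
    rw [hinner, Complex.normSq_eq_norm_sq, ← mul_pow]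
    gcongr
    exact norm_inner_le_norm _ _
  rw [star_dotProduct_self_eq_norm_sq, star_dotProduct_self_eq_norm_sq]
  exact_mod_cast h

variable {κ : Type*} [Fintype κ]

theorem fidelity_le_of_forall_star_dotProduct_eq {M : κ → Matrix n n ℂ} {φ ψ u : n → ℂ}
    (hu : ∀ k, star ψ ⬝ᵥ (M k *ᵥ φ) = star u ⬝ᵥ (M k *ᵥ φ))
    (hpos : 0 < trace (∑ k, M k * vecMulVec φ (star φ) * (M k)ᴴ)) :
    star ψ ⬝ᵥ ((∑ k, M k * vecMulVec φ (star φ) * (M k)ᴴ) *ᵥ ψ) /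
        trace (∑ k, M k * vecMulVec φ (star φ) * (M k)ᴴ) ≤ star u ⬝ᵥ u := by
  rw [div_le_iff₀ hpos]
  simp only [mul_vecMulVec_star_mul_conjTranspose, sum_mulVec, dotProduct_sum, trace_sum,
    trace_vecMulVec, star_dotProduct_vecMulVec_star_mulVec, Finset.mul_sum]
  gcongr with k
  rw [hu k, dotProduct_comm (M k *ᵥ φ)]
  exact normSq_star_dotProduct_le _ _

theorem fidelity_eq_of_mulVec_eq_smul {M : Matrix n n ℂ} {φ ψ u : n → ℂ} {c : ℂ} (hc : c ≠ 0)
    (hu : u ≠ 0) (hMφ : M *ᵥ φ = c • u) (hψu : star ψ ⬝ᵥ u = star u ⬝ᵥ u) :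
    0 < trace (M * vecMulVec φ (star φ) * Mᴴ) ∧
      star ψ ⬝ᵥ ((M * vecMulVec φ (star φ) * Mᴴ) *ᵥ ψ) /
          trace (M * vecMulVec φ (star φ) * Mᴴ) = star u ⬝ᵥ u := by
  have hr : 0 < ‖WithLp.toLp 2 u‖ := by simpa using hu
  have hc' : 0 < Complex.normSq c := Complex.normSq_pos.2 hc
  have hden :
      star (M *ᵥ φ) ⬝ᵥ (M *ᵥ φ) = Complex.normSq c * (‖WithLp.toLp 2 u‖ : ℂ) ^ 2 := by
    rw [hMφ, star_smul, smul_dotProduct, dotProduct_smul, star_dotProduct_self_eq_norm_sq,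
      smul_eq_mul, smul_eq_mul, ← mul_assoc, Complex.star_def, Complex.normSq_eq_conj_mul_self]
  have hnum : Complex.normSq (star ψ ⬝ᵥ (M *ᵥ φ)) =
      Complex.normSq c * (‖WithLp.toLp 2 u‖ : ℂ) ^ 4 := by
    rw [hMφ, dotProduct_smul, hψu, star_dotProduct_self_eq_norm_sq, smul_eq_mul,
      Complex.normSq_mul, ← Complex.ofReal_pow, Complex.normSq_ofReal]
    push_cast
    ring
  rw [mul_vecMulVec_star_mul_conjTranspose, trace_vecMulVec,
    star_dotProduct_vecMulVec_star_mulVec, dotProduct_comm, hden, hnum,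
    star_dotProduct_self_eq_norm_sq]
  refine ⟨by exact_mod_cast (by positivity : 0 < Complex.normSq c * ‖WithLp.toLp 2 u‖ ^ 2), ?_⟩
  have hc₀ : (Complex.normSq c : ℂ) ≠ 0 := by exact_mod_cast hc'.ne'
  have hr₀ : (‖WithLp.toLp 2 u‖ : ℂ) ≠ 0 := by exact_mod_cast hr.ne'
  field_simp

end Kraus

section Projections

variable {n ι α : Type*} [Fintype n] [CommSemiring α] [StarRing α] {P : ι → Matrix n n α}

theorem Matrix.IsHermitian.star_mulVec_dotProduct {A : Matrix n n α} (hA : A.IsHermitian)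
    (v w : n → α) : star (A *ᵥ v) ⬝ᵥ w = star v ⬝ᵥ (A *ᵥ w) := by
  rw [star_mulVec, hA.eq, dotProduct_mulVec]

theorem IsStarProjection.star_mulVec_dotProduct_mulVec {A : Matrix n n α}
    (hA : IsStarProjection A) (v w : n → α) :
    star (A *ᵥ v) ⬝ᵥ (A *ᵥ w) = star v ⬝ᵥ (A *ᵥ w) := by
  rw [(isHermitian_iff_isSelfAdjoint.2 hA.isSelfAdjoint).star_mulVec_dotProduct, mulVec_mulVec,
    hA.isIdempotentElem.eq]

theorem OrthogonalIdempotents.isStarProjection_sum [DecidableEq n]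
    (hP : OrthogonalIdempotents P) (hH : ∀ i, (P i).IsHermitian) (S : Finset ι) :
    IsStarProjection (∑ i ∈ S, P i) :=
  ⟨hP.isIdempotentElem_sum, isSelfAdjoint_sum S fun i _ => hH i⟩

theorem OrthogonalIdempotents.star_mulVec_dotProduct_mulVec_eq_zero [DecidableEq n]
    (hP : OrthogonalIdempotents P) (hH : ∀ i, (P i).IsHermitian) {i j : ι} (hij : i ≠ j)
    (v w : n → α) : star (P i *ᵥ v) ⬝ᵥ (P j *ᵥ w) = 0 := by
  rw [(hH i).star_mulVec_dotProduct, mulVec_mulVec, hP.ortho hij, zero_mulVec, dotProduct_zero]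

theorem OrthogonalIdempotents.star_sum_mulVec_dotProduct_sum_mulVec [DecidableEq n]
    (hP : OrthogonalIdempotents P) (hH : ∀ i, (P i).IsHermitian) (S : Finset ι)
    (y : ι → n → α) :
    star (∑ i ∈ S, P i *ᵥ y i) ⬝ᵥ ∑ i ∈ S, P i *ᵥ y i =
      ∑ i ∈ S, star (P i *ᵥ y i) ⬝ᵥ (P i *ᵥ y i) := by
  rw [star_sum, sum_dotProduct]
  refine Finset.sum_congr rfl fun i hi => ?_
  rw [dotProduct_sum]
  exact Finset.sum_eq_single_of_mem i hi fun j _ hji =>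
    hP.star_mulVec_dotProduct_mulVec_eq_zero hH (Ne.symm hji) _ _

theorem CompleteOrthogonalIdempotents.star_dotProduct_mulVec_eq_of_commute [Fintype ι]
    [DecidableEq n] (hP : CompleteOrthogonalIdempotents P) (hH : ∀ i, (P i).IsHermitian)
    {M : Matrix n n α} (hM : ∀ i, Commute M (P i)) {S : Finset ι} {φ ψ : n → α}
    (hS : ∀ i ∉ S, P i *ᵥ ψ = 0 ∨ P i *ᵥ φ = 0) :
    star ψ ⬝ᵥ (M *ᵥ φ) = star ((∑ i ∈ S, P i) *ᵥ ψ) ⬝ᵥ (M *ᵥ φ) := by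
  conv_lhs => rw [← one_mulVec ψ, ← hP.complete]
  simp only [sum_mulVec, star_sum, sum_dotProduct]
  refine (Finset.sum_subset (Finset.subset_univ S) fun i _ hi => ?_).symm
  rcases hS i hi with h | h
  · rw [h, star_zero, zero_dotProduct]
  · rw [(hH i).star_mulVec_dotProduct, mulVec_mulVec, ← (hM i).eq, ← mulVec_mulVec, h,
      mulVec_zero, dotProduct_zero]

end Projections

section Order

variable {n ι R : Type*} [Fintype n] [DecidableEq n] [CommRing R] [PartialOrder R] [StarRing R]
  [StarOrderedRing R] {P : ι → Matrix n n R}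

theorem posSemidef_one_sub_conjTranspose_mul_self_of_le {A : Matrix n n R}
    (h : ∀ x, star (A *ᵥ x) ⬝ᵥ (A *ᵥ x) ≤ star x ⬝ᵥ x) : (1 - Aᴴ * A).PosSemidef := by
  rw [posSemidef_iff_dotProduct_mulVec]
  refine ⟨isHermitian_one.sub (isHermitian_conjTranspose_mul_self A), fun x => ?_⟩
  rw [sub_mulVec, one_mulVec, dotProduct_sub, ← mulVec_mulVec, dotProduct_mulVec, ← star_mulVec]
  exact sub_nonneg.2 (h x)

theorem CompleteOrthogonalIdempotents.sum_star_mulVec_dotProduct_mulVec_le [Fintype ι]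
    (hP : CompleteOrthogonalIdempotents P) (hH : ∀ i, (P i).IsHermitian) (S : Finset ι)
    (x : n → R) : ∑ i ∈ S, star (P i *ᵥ x) ⬝ᵥ (P i *ᵥ x) ≤ star x ⬝ᵥ x :=
  calc ∑ i ∈ S, star (P i *ᵥ x) ⬝ᵥ (P i *ᵥ x)
      ≤ ∑ i, star (P i *ᵥ x) ⬝ᵥ (P i *ᵥ x) :=
        Finset.sum_le_sum_of_subset_of_nonneg (Finset.subset_univ S) fun i _ _ =>
          dotProduct_star_self_nonneg _
    _ = star x ⬝ᵥ x := by
        rw [← hP.toOrthogonalIdempotents.star_sum_mulVec_dotProduct_sum_mulVec hH, ← sum_mulVec,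
          hP.complete, one_mulVec]

end Order

theorem CompleteOrthogonalIdempotents.posSemidef_one_sub_conjTranspose_mul_self_sum_smul
    {n ι : Type*} [Fintype n] [DecidableEq n] [Fintype ι] {P : ι → Matrix n n ℂ}
    (hP : CompleteOrthogonalIdempotents P) (hH : ∀ i, (P i).IsHermitian) {S : Finset ι}
    {c : ι → ℂ} {φ ψ : n → ℂ}
    (hc : ∀ i ∈ S, (Complex.normSq (c i) : ℂ) * (star (P i *ᵥ φ) ⬝ᵥ (P i *ᵥ φ)) *
      (star (P i *ᵥ ψ) ⬝ᵥ (P i *ᵥ ψ)) ≤ 1) :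
    (1 - (∑ i ∈ S, c i • (P i * vecMulVec ψ (star φ) * P i))ᴴ *
      ∑ i ∈ S, c i • (P i * vecMulVec ψ (star φ) * P i)).PosSemidef := by
  refine posSemidef_one_sub_conjTranspose_mul_self_of_le fun x => ?_
  have hMx : (∑ i ∈ S, c i • (P i * vecMulVec ψ (star φ) * P i)) *ᵥ x =
      ∑ i ∈ S, P i *ᵥ ((c i * (star φ ⬝ᵥ (P i *ᵥ x))) • ψ) := by
    simp only [sum_mulVec, smul_mulVec, mul_vecMulVec_mul_mulVec, mulVec_smul, smul_smul]
  rw [hMx, hP.toOrthogonalIdempotents.star_sum_mulVec_dotProduct_sum_mulVec hH]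
  refine le_trans (Finset.sum_le_sum fun i hi => ?_)
    (hP.sum_star_mulVec_dotProduct_mulVec_le hH S x)
  have hPi : IsStarProjection (P i) := ⟨hP.idem i, hH i⟩
  have hcs : (Complex.normSq (star φ ⬝ᵥ (P i *ᵥ x)) : ℂ) ≤
      (star (P i *ᵥ φ) ⬝ᵥ (P i *ᵥ φ)) * (star (P i *ᵥ x) ⬝ᵥ (P i *ᵥ x)) := by
    rw [← hPi.star_mulVec_dotProduct_mulVec]
    exact normSq_star_dotProduct_le _ _
  rw [mulVec_smul, star_smul, smul_dotProduct, dotProduct_smul, smul_eq_mul, smul_eq_mul,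
    ← mul_assoc, RCLike.star_def, ← Complex.normSq_eq_conj_mul_self, Complex.normSq_mul,
    Complex.ofReal_mul]
  calc (Complex.normSq (c i) : ℂ) * Complex.normSq (star φ ⬝ᵥ (P i *ᵥ x)) *
        (star (P i *ᵥ ψ) ⬝ᵥ (P i *ᵥ ψ))
      ≤ (Complex.normSq (c i) : ℂ) *
          ((star (P i *ᵥ φ) ⬝ᵥ (P i *ᵥ φ)) * (star (P i *ᵥ x) ⬝ᵥ (P i *ᵥ x))) *
          (star (P i *ᵥ ψ) ⬝ᵥ (P i *ᵥ ψ)) := by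
        gcongr
        · exact dotProduct_star_self_nonneg _
        · exact_mod_cast Complex.normSq_nonneg _
    _ = (Complex.normSq (c i) : ℂ) * (star (P i *ᵥ φ) ⬝ᵥ (P i *ᵥ φ)) *
          (star (P i *ᵥ ψ) ⬝ᵥ (P i *ᵥ ψ)) * (star (P i *ᵥ x) ⬝ᵥ (P i *ᵥ x)) := by ring
    _ ≤ 1 * (star (P i *ᵥ x) ⬝ᵥ (P i *ᵥ x)) := by
        gcongr
        · exact dotProduct_star_self_nonneg _
        · exact hc i hi
    _ = star (P i *ᵥ x) ⬝ᵥ (P i *ᵥ x) := one_mul _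

section Weight

variable {d : ℕ}

theorem wt_eq_norm_sq (P : Matrix (Fin d) (Fin d) ℂ) (v : Fin d → ℂ) :
    wt P v = ‖WithLp.toLp 2 (P *ᵥ v)‖ ^ 2 := by
  rw [wt, star_dotProduct_self_eq_norm_sq]
  norm_cast

theorem wt_nonneg (P : Matrix (Fin d) (Fin d) ℂ) (v : Fin d → ℂ) : 0 ≤ wt P v := by
  rw [wt_eq_norm_sq]
  positivity

theorem wt_eq_zero_iff {P : Matrix (Fin d) (Fin d) ℂ} {v : Fin d → ℂ} :
    wt P v = 0 ↔ P *ᵥ v = 0 := by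
  simp [wt_eq_norm_sq]

theorem ofReal_wt (P : Matrix (Fin d) (Fin d) ℂ) (v : Fin d → ℂ) :
    (wt P v : ℂ) = star (P *ᵥ v) ⬝ᵥ (P *ᵥ v) := by
  rw [wt_eq_norm_sq, star_dotProduct_self_eq_norm_sq, Complex.ofReal_pow]

theorem CompleteOrthogonalIdempotents.exists_contraction_commute_mulVec_eq_smul {ι : Type*}
    [Fintype ι] {P : ι → Matrix (Fin d) (Fin d) ℂ} (hP : CompleteOrthogonalIdempotents P)
    (hH : ∀ i, (P i).IsHermitian) {φ ψ : Fin d → ℂ} {S : Finset ι} (hS : S.Nonempty)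
    (hSφ : ∀ i ∈ S, wt (P i) φ ≠ 0) (hSψ : ∀ i ∈ S, wt (P i) ψ ≠ 0) :
    ∃ (M : Matrix (Fin d) (Fin d) ℂ) (t : ℂ), t ≠ 0 ∧ (1 - Mᴴ * M).PosSemidef ∧
      (∀ i, Commute M (P i)) ∧ M *ᵥ φ = t • ((∑ i ∈ S, P i) *ᵥ ψ) := by
  have hp (i) (hi : i ∈ S) : 0 < wt (P i) φ := (wt_nonneg _ _).lt_of_ne' (hSφ i hi)
  have hq (i) (hi : i ∈ S) : 0 < wt (P i) ψ := (wt_nonneg _ _).lt_of_ne' (hSψ i hi)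
  -- `t ^ 2 = min (p_i / q_i)` is the largest scale for which the block map is a contraction
  set r := S.inf' hS fun i => wt (P i) φ / wt (P i) ψ
  have hr : 0 < r := (Finset.lt_inf'_iff hS).2 fun i hi => div_pos (hp i hi) (hq i hi)
  set t := √r
  refine ⟨∑ i ∈ S, ((t / wt (P i) φ : ℝ) : ℂ) • (P i * vecMulVec ψ (star φ) * P i), t,
    by exact_mod_cast (Real.sqrt_pos.2 hr).ne', ?_,
    hP.toOrthogonalIdempotents.commute_sum_smul_mul_mul S _ _, ?_⟩
  · refine hP.posSemidef_one_sub_conjTranspose_mul_self_sum_smul hH fun i hi => ?_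
    have hle : t / wt (P i) φ * (t / wt (P i) φ) * wt (P i) φ * wt (P i) ψ ≤ 1 := by
      have htt : t * t ≤ wt (P i) φ / wt (P i) ψ :=
        (Real.mul_self_sqrt hr.le).trans_le (Finset.inf'_le _ hi)
      rw [le_div_iff₀ (hq i hi)] at htt
      calc t / wt (P i) φ * (t / wt (P i) φ) * wt (P i) φ * wt (P i) ψ
          = t * t * wt (P i) ψ / wt (P i) φ := by field_simp
        _ ≤ 1 := (div_le_one (hp i hi)).2 htt
    rw [← ofReal_wt, ← ofReal_wt, Complex.normSq_ofReal]
    exact_mod_cast hle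
  · have hPi (i) : IsStarProjection (P i) := ⟨hP.idem i, hH i⟩
    rw [sum_mulVec, sum_mulVec, Finset.smul_sum]
    refine Finset.sum_congr rfl fun i hi => ?_
    rw [smul_mulVec, mul_vecMulVec_mul_mulVec, ← (hPi i).star_mulVec_dotProduct_mulVec,
      ← ofReal_wt, smul_smul, ← Complex.ofReal_mul, div_mul_cancel₀ _ (hp i hi).ne']

theorem OrthogonalIdempotents.ofReal_sum_wt {ι : Type*} {P : ι → Matrix (Fin d) (Fin d) ℂ}
    (hP : OrthogonalIdempotents P) (hH : ∀ i, (P i).IsHermitian) (S : Finset ι)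
    (v : Fin d → ℂ) :
    ((∑ i ∈ S, wt (P i) v : ℝ) : ℂ) = star ((∑ i ∈ S, P i) *ᵥ v) ⬝ᵥ ((∑ i ∈ S, P i) *ᵥ v) := by
  rw [sum_mulVec, hP.star_sum_mulVec_dotProduct_sum_mulVec hH, Complex.ofReal_sum]
  simp only [ofReal_wt]

theorem CompleteOrthogonalIdempotents.exists_fidelity_eq_sum_wt {ι : Type*} [Fintype ι]
    {P : ι → Matrix (Fin d) (Fin d) ℂ} (hP : CompleteOrthogonalIdempotents P)
    (hH : ∀ i, (P i).IsHermitian) {φ ψ : Fin d → ℂ} {S : Finset ι} (hS : S.Nonempty)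
    (hSφ : ∀ i ∈ S, wt (P i) φ ≠ 0) (hSψ : ∀ i ∈ S, wt (P i) ψ ≠ 0) :
    ∃ M : Matrix (Fin d) (Fin d) ℂ, (1 - Mᴴ * M).PosSemidef ∧ (∀ i, Commute M (P i)) ∧
      0 < trace (M * vecMulVec φ (star φ) * Mᴴ) ∧
      star ψ ⬝ᵥ ((M * vecMulVec φ (star φ) * Mᴴ) *ᵥ ψ) /
          trace (M * vecMulVec φ (star φ) * Mᴴ) = ((∑ i ∈ S, wt (P i) ψ : ℝ) : ℂ) := by
  obtain ⟨M, t, ht, hM, hcomm, hMφ⟩ := hP.exists_contraction_commute_mulVec_eq_smul hH hS hSφ hSψ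
  have hF := hP.toOrthogonalIdempotents.ofReal_sum_wt hH S ψ
  have hQψ : (∑ i ∈ S, P i) *ᵥ ψ ≠ 0 := by
    have hFpos : 0 < ∑ i ∈ S, wt (P i) ψ :=
      Finset.sum_pos (fun i hi => (wt_nonneg _ _).lt_of_ne' (hSψ i hi)) hS
    intro h
    rw [h, star_zero, zero_dotProduct] at hF
    exact hFpos.ne' (by exact_mod_cast hF)
  obtain ⟨hpos, hfid⟩ := fidelity_eq_of_mulVec_eq_smul ht hQψ hMφ
    ((hP.toOrthogonalIdempotents.isStarProjection_sum hH S).star_mulVec_dotProduct_mulVec ψ ψ).symm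
  exact ⟨M, hM, hcomm, hpos, hfid.trans hF.symm⟩

end Weight

theorem stmt_10_general {d : ℕ} {ι : Type} [Fintype ι]
    (H : Matrix (Fin d) (Fin d) ℂ)
    (E : ι → ℝ) (hE : Function.Injective E)
    (P : ι → Matrix (Fin d) (Fin d) ℂ)
    (hHerm : ∀ i, (P i).IsHermitian)
    (hIdem : ∀ i, P i * P i = P i)
    (hOrth : ∀ i j, i ≠ j → P i * P j = 0)
    (hSum : ∑ i, P i = 1)
    (hSpec : H = ∑ i, (E i : ℂ) • P i)
    (φ ψ : Fin d → ℂ) :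
    (∀ (K : ℕ) (M : Fin K → Matrix (Fin d) (Fin d) ℂ),
      ((1 : Matrix (Fin d) (Fin d) ℂ) - ∑ k, (M k)ᴴ * M k).PosSemidef →
      (∀ k, M k * H = H * M k) →
      0 < Matrix.trace (∑ k, M k * vecMulVec φ (star φ) * (M k)ᴴ) →
      star ψ ⬝ᵥ ((∑ k, M k * vecMulVec φ (star φ) * (M k)ᴴ) *ᵥ ψ) /
          Matrix.trace (∑ k, M k * vecMulVec φ (star φ) * (M k)ᴴ) ≤
        ((∑ i ∈ Finset.univ.filter (fun i => wt (P i) φ ≠ 0 ∧ wt (P i) ψ ≠ 0),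
            wt (P i) ψ : ℝ) : ℂ)) ∧
    ((Finset.univ.filter (fun i => wt (P i) φ ≠ 0 ∧ wt (P i) ψ ≠ 0)).Nonempty →
      ∃ M₀ : Matrix (Fin d) (Fin d) ℂ,
        ((1 : Matrix (Fin d) (Fin d) ℂ) - M₀ᴴ * M₀).PosSemidef ∧
        M₀ * H = H * M₀ ∧
        0 < Matrix.trace (M₀ * vecMulVec φ (star φ) * M₀ᴴ) ∧
        star ψ ⬝ᵥ ((M₀ * vecMulVec φ (star φ) * M₀ᴴ) *ᵥ ψ) /
            Matrix.trace (M₀ * vecMulVec φ (star φ) * M₀ᴴ) =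
          ((∑ i ∈ Finset.univ.filter (fun i => wt (P i) φ ≠ 0 ∧ wt (P i) ψ ≠ 0),
              wt (P i) ψ : ℝ) : ℂ)) := by
  have hP : CompleteOrthogonalIdempotents P := ⟨⟨hIdem, fun i j hij => hOrth i j hij⟩, hSum⟩
  set S := Finset.univ.filter fun i => wt (P i) φ ≠ 0 ∧ wt (P i) ψ ≠ 0
  refine ⟨fun K M _ hM hpos => ?_, fun hS => ?_⟩
  · rw [hP.toOrthogonalIdempotents.ofReal_sum_wt hHerm]
    refine fidelity_le_of_forall_star_dotProduct_eq (fun k => ?_) hpos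
    refine hP.star_dotProduct_mulVec_eq_of_commute hHerm
      (hP.commute_of_commute_sum_smul (Complex.ofReal_injective.comp hE) (hSpec ▸ hM k))
      fun i hi => ?_
    rw [← wt_eq_zero_iff, ← wt_eq_zero_iff]
    by_contra! h
    exact hi (Finset.mem_filter.2 ⟨Finset.mem_univ i, h.2, h.1⟩)
  · obtain ⟨M₀, hM₀, hcomm, hpos, hfid⟩ := hP.exists_fidelity_eq_sum_wt hHerm hS
      (fun i hi => (Finset.mem_filter.1 hi).2.1) (fun i hi => (Finset.mem_filter.1 hi).2.2)
    refine ⟨M₀, hM₀, ?_, hpos, hfid⟩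
    rw [hSpec]
    exact Commute.sum_right _ _ _ fun i _ => (hcomm i).smul_right _

/-- **Ultimate fidelity of probabilistic energy-preserving operations.** With `H` Hermitian
(spectral projections `P i`), unit vectors `φ, ψ`, `p_E = ‖P_E φ‖²`, `q_E = ‖P_E ψ‖²`: every
energy-preserving quantum operation with nonzero success probability on `φ` has normalized
fidelity at most `F_max = ∑_{E ∈ Sp(φ) ∩ Sp(ψ)} q_E`, and if `Sp(φ) ∩ Sp(ψ) ≠ ∅` the bound is
attained by a single Kraus operator commuting with `H`. -/
theorem stmt_10 {d : ℕ} {ι : Type} [Fintype ι] [DecidableEq ι]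
    (H : Matrix (Fin d) (Fin d) ℂ) (hH : H.IsHermitian)
    (E : ι → ℝ) (hE : Function.Injective E)
    (P : ι → Matrix (Fin d) (Fin d) ℂ)
    (hHerm : ∀ i, (P i).IsHermitian)
    (hIdem : ∀ i, P i * P i = P i)
    (hOrth : ∀ i j, i ≠ j → P i * P j = 0)
    (hSum : ∑ i, P i = 1)
    (hSpec : H = ∑ i, (E i : ℂ) • P i)
    (φ ψ : Fin d → ℂ) (hφ : star φ ⬝ᵥ φ = 1) (hψ : star ψ ⬝ᵥ ψ = 1) :
    (∀ (K : ℕ) (M : Fin K → Matrix (Fin d) (Fin d) ℂ),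
      ((1 : Matrix (Fin d) (Fin d) ℂ) - ∑ k, (M k)ᴴ * M k).PosSemidef →
      (∀ k, M k * H = H * M k) →
      0 < Matrix.trace (∑ k, M k * vecMulVec φ (star φ) * (M k)ᴴ) →
      star ψ ⬝ᵥ ((∑ k, M k * vecMulVec φ (star φ) * (M k)ᴴ) *ᵥ ψ) /
          Matrix.trace (∑ k, M k * vecMulVec φ (star φ) * (M k)ᴴ) ≤
        ((∑ i ∈ Finset.univ.filter (fun i => wt (P i) φ ≠ 0 ∧ wt (P i) ψ ≠ 0),
            wt (P i) ψ : ℝ) : ℂ)) ∧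
    ((Finset.univ.filter (fun i => wt (P i) φ ≠ 0 ∧ wt (P i) ψ ≠ 0)).Nonempty →
      ∃ M₀ : Matrix (Fin d) (Fin d) ℂ,
        ((1 : Matrix (Fin d) (Fin d) ℂ) - M₀ᴴ * M₀).PosSemidef ∧
        M₀ * H = H * M₀ ∧
        0 < Matrix.trace (M₀ * vecMulVec φ (star φ) * M₀ᴴ) ∧
        star ψ ⬝ᵥ ((M₀ * vecMulVec φ (star φ) * M₀ᴴ) *ᵥ ψ) /
            Matrix.trace (M₀ * vecMulVec φ (star φ) * M₀ᴴ) =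
          ((∑ i ∈ Finset.univ.filter (fun i => wt (P i) φ ≠ 0 ∧ wt (P i) ψ ≠ 0),
              wt (P i) ψ : ℝ) : ℂ)) :=
  stmt_10_general H E hE P hHerm hIdem hOrth hSum hSpec φ ψ
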